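/- Let (x,y) be a quasi-invertible pair in a local Moufang set with y not equivalent to 0 (so x ≁ ∞ and y is a unit). Then α_{ˣy} · τ^{-1}α_x τ · α_y · τ^{-1}α_{x^y}τ = μ_{ˣy} μ_y, where ˣy := (-y)·τ^{-1}α_{-x}τ is the left quasi-inverse and x^y := -(x·τα_yτ^{-1}) is the right quasi-inverse. -/

import Mathlib

/-! Conjugation by `τ` carries `U_∞` into `U_0`, so the left-hand side `φ` lies in
`U_0 α_y U_0 α_{ˣy}`; it fixes `0` and, since `α_{x^y}` undoes `x ↦ x·α_y^{τ⁻¹}`, also `∞`.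
Hence `μ_y⁻¹ φ` lies in `U_0 α_{ˣy} U_0` and swaps `0` and `∞`: it is a μ-map of `ˣy`.
Quasi-invertibility makes `ˣy` a unit, and μ-maps of units are unique, so `μ_y⁻¹ φ = μ_{ˣy}`. -/

open Equiv

structure LocalMoufangSet (X : Type*) where
  r : X → X → Prop
  requiv : Equivalence r
  U : X → Subgroup (Equiv.Perm X)
  preserves : ∀ x : X, ∀ u ∈ U x, ∀ a b : X, r a b ↔ r (u a) (u b)
  big : ∃ a b c : X, ¬ r a b ∧ ¬ r b c ∧ ¬ r a c
  lm1 : ∀ x y : X, r x y → ∀ u ∈ U x, ∃ v ∈ U y, ∀ z : X, r (u z) (v z)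
  lm2_fix : ∀ x : X, ∀ u ∈ U x, u x = x
  lm2_trans : ∀ x y z : X, ¬ r y x → ¬ r z x → ∃! u : Equiv.Perm X, u ∈ U x ∧ u y = z
  lm2'_trans : ∀ x y z : X, ¬ r y x → ¬ r z x → ∃ u ∈ U x, r (u y) z
  lm2'_free : ∀ x : X, ∀ u ∈ U x, ∀ y : X, ¬ r y x → r (u y) y → ∀ z : X, r (u z) z
  lm3 : ∀ x : X, ∀ g ∈ (⨆ y : X, U y : Subgroup (Equiv.Perm X)),
      (U x).map (MulAut.conj g).toMonoidHom = U (g x)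

namespace LocalMoufangSet

variable {X : Type*} (M : LocalMoufangSet X)

/-- The little projective group. -/
def G : Subgroup (Equiv.Perm X) := ⨆ x : X, M.U x

/-- `x` is a unit with respect to the base points `o` (zero) and `ι` (infinity). -/
def IsUnitPt (o ι x : X) : Prop := ¬ M.r x o ∧ ¬ M.r x ι

/-- `μ` is the μ-map of `x`: it lies in the double coset `U_0 α_x U_0` and swaps `o` and `ι`.
(We use the left-action convention: a right product `g α h` corresponds to `h * α * g`.) -/
def IsMuMap (o ι x : X) (μ : Equiv.Perm X) : Prop :=
  μ o = ι ∧ μ ι = o ∧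
    ∃ a ∈ M.U ι, a o = x ∧ ∃ g ∈ M.U o, ∃ h ∈ M.U o, μ = h * a * g

/-- Specialness with respect to a μ-map `τ`: `(-x)τ = -(xτ)` for all units `x`. -/
def Special (o ι : X) (τ : Equiv.Perm X) : Prop :=
  ∀ z : X, IsUnitPt M o ι z → ∀ a ∈ M.U ι, a o = z → ∀ b ∈ M.U ι, b o = τ z →
    τ (a⁻¹ o) = b⁻¹ o

lemma mem_G_of_mem_U {x : X} {u : Perm X} (hu : u ∈ M.U x) : u ∈ M.G :=
  le_iSup M.U x hu

lemma r_iff_of_mem_G {g : Perm X} (hg : g ∈ M.G) (a b : X) :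
    M.r a b ↔ M.r (g a) (g b) := by
  refine Subgroup.iSup_induction M.U (C := fun g => ∀ a b, M.r a b ↔ M.r (g a) (g b)) hg
    (fun x u hu => M.preserves x u hu) (fun _ _ => Iff.rfl) (fun p q hp hq a b => ?_) a b
  exact (hq a b).trans (hp (q a) (q b))

lemma r_inv_apply_iff {g : Perm X} (hg : g ∈ M.G) (a b : X) :
    M.r (g⁻¹ a) b ↔ M.r a (g b) := by
  simpa using M.r_iff_of_mem_G hg (g⁻¹ a) b

lemma r_apply_iff_of_mem_U {x : X} {u : Perm X} (hu : u ∈ M.U x) (a : X) :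
    M.r (u a) x ↔ M.r a x := by
  rw [M.preserves x u hu a x, M.lm2_fix x u hu]

lemma conj_mem_U {g : Perm X} (hg : g ∈ M.G) {x : X} {u : Perm X} (hu : u ∈ M.U x) :
    g * u * g⁻¹ ∈ M.U (g x) := by
  rw [← M.lm3 x g hg]
  exact Subgroup.mem_map.mpr ⟨u, hu, rfl⟩

lemma eq_of_mem_U_of_apply_eq {x y : X} (hyx : ¬ M.r y x) {u v : Perm X}
    (hu : u ∈ M.U x) (hv : v ∈ M.U x) (huv : u y = v y) : u = v := by
  obtain ⟨w, -, hw⟩ := M.lm2_trans x y (u y) hyx ((M.r_apply_iff_of_mem_U hu y).not.mpr hyx)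
  rw [hw u ⟨hu, rfl⟩, hw v ⟨hv, huv.symm⟩]

section MuMap

variable {M} {o ι : X}

lemma IsMuMap.mem_G {z : X} {μ : Perm X} (hμ : M.IsMuMap o ι z μ) : μ ∈ M.G := by
  obtain ⟨-, -, a, ha, -, g, hg, h, hh, rfl⟩ := hμ
  exact mul_mem (mul_mem (M.mem_G_of_mem_U hh) (M.mem_G_of_mem_U ha)) (M.mem_G_of_mem_U hg)

lemma IsMuMap.conj_mem_U {z : X} {μ u : Perm X} (hμ : M.IsMuMap o ι z μ) (hu : u ∈ M.U ι) :
    μ * u * μ⁻¹ ∈ M.U o := by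
  simpa [hμ.2.1] using M.conj_mem_U hμ.mem_G hu

theorem IsMuMap.unique (h0 : ¬ M.r o ι) {z : X} (hz : M.IsUnitPt o ι z) {μ μ' : Perm X}
    (hμ : M.IsMuMap o ι z μ) (hμ' : M.IsMuMap o ι z μ') : μ = μ' := by
  obtain ⟨hμo, hμι, a, ha, haz, g, hg, h, hh, rfl⟩ := hμ
  obtain ⟨hμo', hμι', a', ha', ha'z, g', hg', h', hh', rfl⟩ := hμ'
  obtain rfl : a = a' := M.eq_of_mem_U_of_apply_eq h0 ha ha' (haz.trans ha'z.symm)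
  simp only [Perm.mul_apply, M.lm2_fix o g hg, M.lm2_fix o g' hg', haz] at hμo hμo'
  obtain rfl : h = h' := M.eq_of_mem_U_of_apply_eq hz.1 hh hh' (hμo.trans hμo'.symm)
  have hgι : g ι = g' ι := by simpa using hμι.trans hμι'.symm
  obtain rfl : g = g' :=
    M.eq_of_mem_U_of_apply_eq (fun h => h0 (M.requiv.symm h)) hg hg' hgι
  rfl

lemma isUnitPt_leftQuasiInverse (h0 : ¬ M.r o ι) {e : X} {τ : Perm X} (hτ : M.IsMuMap o ι e τ)
    {α αy : Perm X} (hα : α ∈ M.U ι) (hαy : αy ∈ M.U ι) {y : X} (hy : M.IsUnitPt o ι y)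
    (hαyo : αy o = y) (hqi : ¬ M.r (τ (α o)) (αy⁻¹ o) ∨ M.r (α o) o ∨ M.r y o) :
    M.IsUnitPt o ι ((τ * α⁻¹ * τ⁻¹) (αy⁻¹ o)) := by
  have hA : τ * α * τ⁻¹ ∈ M.U o := hτ.conj_mem_U hα
  have hAι : (τ * α * τ⁻¹) ι = τ (α o) := by simp [← hτ.1]
  have hmι : ¬ M.r (αy⁻¹ o) ι := (M.r_apply_iff_of_mem_U (inv_mem hαy) o).not.mpr h0
  have hmo : ¬ M.r (αy⁻¹ o) o := by
    rw [M.r_inv_apply_iff (M.mem_G_of_mem_U hαy), hαyo]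
    exact fun h => hy.1 (M.requiv.symm h)
  have hK : ¬ M.r (τ (α o)) (αy⁻¹ o) := by
    rcases hqi with h | hxo | hyo
    · exact h
    · have hτx : M.r (τ (α o)) ι := hτ.1 ▸ (M.r_iff_of_mem_G hτ.mem_G _ _).mp hxo
      exact fun h => hmι (M.requiv.trans (M.requiv.symm h) hτx)
    · exact absurd hyo hy.1
  rw [show τ * α⁻¹ * τ⁻¹ = (τ * α * τ⁻¹)⁻¹ by group]
  constructor
  · rwa [M.r_apply_iff_of_mem_U (inv_mem hA)]
  · rw [M.r_inv_apply_iff (M.mem_G_of_mem_U hA), hAι]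
    exact fun h => hK (M.requiv.symm h)

lemma isMuMap_inv_mul (h0 : ¬ M.r o ι) {y : X} {μy αy D A c : Perm X}
    (hμy : M.IsMuMap o ι y μy) (hαy : αy ∈ M.U ι) (hαyo : αy o = y)
    (hD : D ∈ M.U o) (hA : A ∈ M.U o) (hc : c ∈ M.U ι) (hco : c o = A⁻¹ (αy⁻¹ o))
    (hι : (D * αy * A * c) ι = ι) :
    M.IsMuMap o ι (c o) (μy⁻¹ * (D * αy * A * c)) := by
  obtain ⟨hμo, hμι, a, ha, hao, g, hg, k, hk, rfl⟩ := hμy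
  obtain rfl : a = αy := M.eq_of_mem_U_of_apply_eq h0 ha hαy (hao.trans hαyo.symm)
  have ho : (D * a * A * c) o = o := by simp [hco, M.lm2_fix o D hD]
  have hw : (a * A * c)⁻¹ ∈ M.G := inv_mem (mul_mem (mul_mem (M.mem_G_of_mem_U ha)
    (M.mem_G_of_mem_U hA)) (M.mem_G_of_mem_U hc))
  have hconj := M.conj_mem_U hw (mul_mem (inv_mem hk) hD)
  refine ⟨?_, ?_, c, hc, rfl, _, ?_, g⁻¹ * A, mul_mem (inv_mem hg) hA,
    show _ = _ * _ * ((a * A * c)⁻¹ * (k⁻¹ * D) * (a * A * c)⁻¹⁻¹) by group⟩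
  · rw [Perm.mul_apply, ho, Perm.inv_eq_iff_eq, hμι]
  · rw [Perm.mul_apply, hι, Perm.inv_eq_iff_eq, hμo]
  · rwa [show (a * A * c)⁻¹ o = o by rw [Perm.inv_eq_iff_eq]; simp [hco]] at hconj

end MuMap

end LocalMoufangSet

/-- Left-action convention: `ˣy = (τ * α⁻¹ * τ⁻¹) (αy⁻¹ o)`, `x·α_y^{τ⁻¹} = (τ⁻¹ * αy * τ) x`,
`x^y = b⁻¹ o` where `b` is its α-map, and right products are reversed. -/
theorem stmt8_general {X : Type*} (M : LocalMoufangSet X) (o ι : X) (h0 : ¬ M.r o ι)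
    (e : X)
    (τ : Equiv.Perm X) (hτ : M.IsMuMap o ι e τ)
    (x : X)
    (y : X) (hy : M.IsUnitPt o ι y)
    (α : Equiv.Perm X) (hαU : α ∈ M.U ι) (hαo : α o = x)
    (αy : Equiv.Perm X) (hαyU : αy ∈ M.U ι) (hαyo : αy o = y)
    -- (x,y) is quasi-invertible
    (hqi : ¬ M.r (τ x) (αy⁻¹ o) ∨ M.r x o ∨ M.r y o)
    -- α-map of the left quasi-inverse ˣy
    (c : Equiv.Perm X) (hcU : c ∈ M.U ι)
    (hc : c o = (τ * α⁻¹ * τ⁻¹) (αy⁻¹ o))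
    -- α-map of x·α_y^{τ⁻¹}, whose negative is the right quasi-inverse x^y
    (b : Equiv.Perm X) (hbU : b ∈ M.U ι) (hb : b o = (τ⁻¹ * αy * τ) x)
    -- α-map of the right quasi-inverse x^y = -(x·α_y^{τ⁻¹})
    (d : Equiv.Perm X) (hdU : d ∈ M.U ι) (hd : d o = b⁻¹ o)
    (μl μy : Equiv.Perm X)
    (hμl : M.IsMuMap o ι ((τ * α⁻¹ * τ⁻¹) (αy⁻¹ o)) μl)
    (hμy : M.IsMuMap o ι y μy) :
    (τ * d * τ⁻¹) * αy * (τ * α * τ⁻¹) * c = μy * μl := by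
  subst hαo
  have hunit := M.isUnitPt_leftQuasiInverse h0 hτ hαU hαyU hy hαyo hqi
  obtain rfl : d = b⁻¹ := M.eq_of_mem_U_of_apply_eq h0 hdU (inv_mem hbU) hd
  have hco : c o = (τ * α * τ⁻¹)⁻¹ (αy⁻¹ o) := by simp [hc]
  have hι : (τ * b⁻¹ * τ⁻¹ * αy * (τ * α * τ⁻¹) * c) ι = ι := by
    have hτι : τ⁻¹ ι = o := Perm.inv_eq_iff_eq.mpr hτ.1.symm
    have hb' : b⁻¹ (τ⁻¹ (αy (τ (α o)))) = o := by
      rw [Perm.inv_eq_iff_eq, hb, Perm.mul_apply, Perm.mul_apply]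
    simp only [Perm.mul_apply, M.lm2_fix ι c hcU, hτι, hb', hτ.1]
  have hN := M.isMuMap_inv_mul h0 hμy hαyU hαyo (hτ.conj_mem_U (inv_mem hbU))
    (hτ.conj_mem_U hαU) hcU hco hι
  rw [← hc] at hunit hμl
  rw [← hN.unique h0 hunit hμl, mul_inv_cancel_left]

/-- the quasi-inverse identity
`α_{ˣy} α_x^τ α_y α_{x^y}^τ = μ_{ˣy} μ_y` for a quasi-invertible pair `(x,y)`
with `y ≁ 0`.  Left-action convention: `ˣy = (τ * α⁻¹ * τ⁻¹) (αy⁻¹ o)`,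
`x·α_y^{τ⁻¹} = (τ⁻¹ * αy * τ) x`, `x^y = b⁻¹ o` where `b` is its α-map, and the
right product reverses. -/
theorem stmt8 {X : Type*} (M : LocalMoufangSet X) (o ι : X) (h0 : ¬ M.r o ι)
    (e : X) (he : M.IsUnitPt o ι e)
    (τ : Equiv.Perm X) (hτ : M.IsMuMap o ι e τ)
    (x : X) (hxι : ¬ M.r x ι)
    (y : X) (hy : M.IsUnitPt o ι y)
    (α : Equiv.Perm X) (hαU : α ∈ M.U ι) (hαo : α o = x)
    (αy : Equiv.Perm X) (hαyU : αy ∈ M.U ι) (hαyo : αy o = y)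
    -- (x,y) is quasi-invertible
    (hqi : ¬ M.r (τ x) (αy⁻¹ o) ∨ M.r x o ∨ M.r y o)
    -- α-map of the left quasi-inverse ˣy
    (c : Equiv.Perm X) (hcU : c ∈ M.U ι)
    (hc : c o = (τ * α⁻¹ * τ⁻¹) (αy⁻¹ o))
    -- α-map of x·α_y^{τ⁻¹}, whose negative is the right quasi-inverse x^y
    (b : Equiv.Perm X) (hbU : b ∈ M.U ι) (hb : b o = (τ⁻¹ * αy * τ) x)
    -- α-map of the right quasi-inverse x^y = -(x·α_y^{τ⁻¹})
    (d : Equiv.Perm X) (hdU : d ∈ M.U ι) (hd : d o = b⁻¹ o)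
    (μl μy : Equiv.Perm X)
    (hμl : M.IsMuMap o ι ((τ * α⁻¹ * τ⁻¹) (αy⁻¹ o)) μl)
    (hμy : M.IsMuMap o ι y μy) :
    (τ * d * τ⁻¹) * αy * (τ * α * τ⁻¹) * c = μy * μl :=
  stmt8_general M o ι h0 e τ hτ x y hy α hαU hαo αy hαyU hαyo hqi c hcU hc b hbU hb d hdU hd μl μy
    hμl hμy
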